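/- (Theorem 2(ii), online R-ProxSPB.) Let (Ω, 𝓕, P) be a probability space, T ≥ 1 and q ≥ 1 integers, X₀ ∈ St(d,r) deterministic, γ = 2/5, and let (X_t)_{t=0}^{T}, (v_t)_{t=0}^{T−1}, (ζ_t)_{t=0}^{T−1} be random matrices in ℝ^{d×r} such that, almost surely for every 0 ≤ t ≤ T−1: X_t ∈ St(d,r); ζ_t ∈ T_{X_t} is the minimizer over T_{X_t} of ζ ↦ ⟨v_t, ζ⟩ + (1/(2γ))‖ζ‖² + h(X_t + ζ); X_{t+1} = Retr_{X_t}(ηζ_t); f(X_{t+1}) ≤ f(X_t) + η⟨∇f(X_t), ζ_t⟩ + (L_R η²/2)‖ζ_t‖²; ‖X_{t+1} − (X_t + ηζ_t)‖ ≤ M₂ η² ‖ζ_t‖²; and ‖Retr_{X_t}(χ) − X_t‖ ≤ M₁‖χ‖ for all χ ∈ T_{X_t}, where Retr is the polar retraction. Assume L_R, L_h, M₁, M₂ > 0, Λ ≥ 0, σ ≥ 0, s > 0, η ∈ (0,1] satisfies both Λη²/2 + L̃η − 2 ≤ −1 and Λη² ≤ 1/2, where L̃ = L_R/2 + L_h M₂;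 h : ℝ^{d×r} → ℝ is convex and L_h-Lipschitz; f : ℝ^{d×r} → ℝ is differentiable; F = f + h satisfies F(X) ≥ F* for all X ∈ St(d,r); Δ₀ = F(X₀) − F*; all the indicated expectations are finite; and for every t, E[‖v_t − ∇f(X_t)‖²] ≤ σ²/s + (Λη²/q) ∑_{i=q⌊t/q⌋}^{t−1} E[‖ζ_i‖²]. For each t let ξ_t be the minimizer over T_{X_t} of ξ ↦ ⟨∇f(X_t), ξ⟩ + (1/(2γ))‖ξ‖² + h(X_t + ξ), and set G_t = (X_t − Retr_{X_t}(γξ_t))/γ. Then (1/T)∑_{t=0}^{T−1} E[‖G_t‖²] ≤ (14M₁² + (16/5)M₁²Λη²)·Δ₀/(ηT) + 59M₁²σ²/(5s). -/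

import Mathlib

open Matrix MeasureTheory Finset

noncomputable section

/-- The space of real `d × r` matrices. -/
abbrev Mat (d r : ℕ) := Matrix (Fin d) (Fin r) ℝ

/-- The Frobenius inner product `⟨A, B⟩ = tr(Aᵀ B)`. -/
def finner {d r : ℕ} (A B : Mat d r) : ℝ := (Aᵀ * B).trace

/-- The Stiefel manifold `St(d,r) = {X : Xᵀ X = I}`. -/
def Stiefel {d r : ℕ} (X : Mat d r) : Prop := Xᵀ * X = 1

/-- The tangent space to the Stiefel manifold at `X`:
`T_X = {ζ : ζᵀ X + Xᵀ ζ = 0}`. -/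
def TangentAt {d r : ℕ} (X : Mat d r) : Set (Mat d r) :=
  {ζ | ζᵀ * X + Xᵀ * ζ = 0}

lemma posSemidef_one_add_transpose_mul_self {d r : ℕ} (ξ : Mat d r) :
    (1 + ξᵀ * ξ).PosSemidef := by
  have h := Matrix.posSemidef_conjTranspose_mul_self ξ
  rw [Matrix.conjTranspose_eq_transpose_of_trivial] at h
  exact Matrix.PosSemidef.one.add h

/-- The positive semidefinite square root of a positive semidefinite matrix
(the definition that Mathlib used to provide as `Matrix.PosSemidef.sqrt`). -/
def Matrix.PosSemidef.sqrt {n : Type*} [Fintype n] [DecidableEq n]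
    {A : Matrix n n ℝ} (hA : A.PosSemidef) : Matrix n n ℝ :=
  (hA.1.eigenvectorUnitary : Matrix n n ℝ) * diagonal (Real.sqrt ∘ hA.1.eigenvalues) *
    (star hA.1.eigenvectorUnitary : Matrix n n ℝ)

/-- The polar retraction `Retr_X(ξ) = (X + ξ)(I + ξᵀ ξ)^{-1/2}`, where the square root
is the unique positive-semidefinite (here positive-definite) square root. -/
def polarRetr {d r : ℕ} (X ξ : Mat d r) : Mat d r :=
  (X + ξ) * ((posSemidef_one_add_transpose_mul_self ξ).sqrt)⁻¹

/- Equip matrices with the Frobenius norm (the norm induced by `finner`). -/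
attribute [local instance] Matrix.frobeniusNormedAddCommGroup Matrix.frobeniusNormedSpace

/-- The subproblem objective `φ(ζ) = ⟨v, ζ⟩ + (1/(2γ))‖ζ‖² + h(X + ζ)`. -/
def phi {d r : ℕ} (γ : ℝ) (h : Mat d r → ℝ) (X v ζ : Mat d r) : ℝ :=
  finner v ζ + (1 / (2 * γ)) * ‖ζ‖ ^ 2 + h (X + ζ)

/-- `ζ` is a minimizer of `phi γ h X v` over the tangent space at `X`. -/
def IsSubMin {d r : ℕ} (γ : ℝ) (h : Mat d r → ℝ) (X v ζ : Mat d r) : Prop :=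
  ζ ∈ TangentAt X ∧ ∀ ζ' ∈ TangentAt X, phi γ h X v ζ ≤ phi γ h X v ζ'

lemma finner_eq_sum {d r : ℕ} (A B : Mat d r) : finner A B = ∑ j, ∑ i, A i j * B i j := by
  simp [finner, Matrix.trace, Matrix.mul_apply, Matrix.diag, Matrix.transpose_apply]

lemma norm_sq_eq_finner {d r : ℕ} (A : Mat d r) : ‖A‖ ^ 2 = finner A A := by
  have h := Matrix.frobenius_norm_def A
  rw [finner_eq_sum]
  rw [h, ← Real.rpow_natCast _ 2, ← Real.rpow_mul (by positivity)]
  norm_num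
  rw [Finset.sum_comm]
  exact Finset.sum_congr rfl fun j _ => Finset.sum_congr rfl fun i _ => sq (A i j) ▸ (sq (A i j)).symm ▸ (by ring)

lemma finner_comm {d r : ℕ} (A B : Mat d r) : finner A B = finner B A := by
  simp [finner_eq_sum, mul_comm]
lemma finner_add_left {d r : ℕ} (A B C : Mat d r) : finner (A + B) C = finner A C + finner B C := by
  simp [finner_eq_sum, Matrix.add_apply, add_mul, Finset.sum_add_distrib]
lemma finner_add_right {d r : ℕ} (A B C : Mat d r) : finner A (B + C) = finner A B + finner A C := by
  simp [finner_eq_sum, Matrix.add_apply, mul_add, Finset.sum_add_distrib]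
lemma finner_smul_left {d r : ℕ} (c : ℝ) (A B : Mat d r) : finner (c • A) B = c * finner A B := by
  simp [finner_eq_sum, Matrix.smul_apply, Finset.mul_sum, mul_assoc, smul_eq_mul]
lemma finner_smul_right {d r : ℕ} (c : ℝ) (A B : Mat d r) : finner A (c • B) = c * finner A B := by
  simp [finner_eq_sum, Matrix.smul_apply, Finset.mul_sum, smul_eq_mul]; ring_nf
  exact Finset.sum_congr rfl fun j _ => Finset.sum_congr rfl fun i _ => by ring
lemma finner_sub_left {d r : ℕ} (A B C : Mat d r) : finner (A - B) C = finner A C - finner B C := by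
  simp [finner_eq_sum, Matrix.sub_apply, sub_mul, Finset.sum_sub_distrib]
lemma finner_sub_right {d r : ℕ} (A B C : Mat d r) : finner A (B - C) = finner A B - finner A C := by
  simp [finner_eq_sum, Matrix.sub_apply, mul_sub, Finset.sum_sub_distrib]
lemma finner_zero_right {d r : ℕ} (A : Mat d r) : finner A 0 = 0 := by
  simp [finner_eq_sum]
lemma stiefel_polarRetr {d r : ℕ} {X χ : Mat d r} (hX : Stiefel X) (hχ : χ ∈ TangentAt X) :
    Stiefel (polarRetr X χ) := by
  set S := (posSemidef_one_add_transpose_mul_self χ).sqrt with hS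
  have hSS : S * S = 1 + χᵀ * χ := by
    have hPSD := posSemidef_one_add_transpose_mul_self χ
    have hU1 : star (hPSD.1.eigenvectorUnitary : Matrix (Fin r) (Fin r) ℝ) *
        (hPSD.1.eigenvectorUnitary : Matrix (Fin r) (Fin r) ℝ) = 1 :=
      Unitary.star_mul_self_of_mem (SetLike.coe_mem _)
    have hsp := hPSD.1.spectral_theorem
    rw [Unitary.conjStarAlgAut_apply] at hsp
    conv_rhs => rw [hsp]
    rw [hS, Matrix.PosSemidef.sqrt]
    have hD : diagonal (Real.sqrt ∘ hPSD.1.eigenvalues) * diagonal (Real.sqrt ∘ hPSD.1.eigenvalues)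
        = diagonal (RCLike.ofReal ∘ hPSD.1.eigenvalues) := by
      rw [diagonal_mul_diagonal]
      congr 1; funext i
      simp [Real.mul_self_sqrt (hPSD.eigenvalues_nonneg i)]
    calc _ = (hPSD.1.eigenvectorUnitary : Matrix (Fin r) (Fin r) ℝ) *
          diagonal (Real.sqrt ∘ hPSD.1.eigenvalues) *
          (star (hPSD.1.eigenvectorUnitary : Matrix (Fin r) (Fin r) ℝ) *
            (hPSD.1.eigenvectorUnitary : Matrix (Fin r) (Fin r) ℝ)) *
          diagonal (Real.sqrt ∘ hPSD.1.eigenvalues) *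
          star (hPSD.1.eigenvectorUnitary : Matrix (Fin r) (Fin r) ℝ) := by
            simp only [Matrix.mul_assoc]
      _ = _ := by rw [hU1, Matrix.mul_one, Matrix.mul_assoc _ (diagonal _) (diagonal _), hD]
  have hPD : (1 + χᵀ * χ).PosDef := by
    have h := Matrix.posSemidef_conjTranspose_mul_self χ
    rw [Matrix.conjTranspose_eq_transpose_of_trivial] at h
    exact Matrix.PosDef.add_posSemidef Matrix.PosDef.one h
  have hdet : IsUnit S.det := by
    have : S.det * S.det = (1 + χᵀ * χ).det := by rw [← Matrix.det_mul, hSS]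
    have hpos : (0:ℝ) < S.det * S.det := this ▸ hPD.det_pos
    have : S.det ≠ 0 := fun h => by simp [h] at hpos
    exact this.isUnit
  have hSt : Sᵀ = S := by
    rw [hS, Matrix.PosSemidef.sqrt, star_eq_conjTranspose, conjTranspose_eq_transpose_of_trivial,
      Matrix.transpose_mul, Matrix.transpose_mul, transpose_transpose, diagonal_transpose,
      Matrix.mul_assoc]
  have hinv : S * S⁻¹ = 1 := Matrix.mul_nonsing_inv S hdet
  have hinv' : S⁻¹ * S = 1 := Matrix.nonsing_inv_mul S hdet
  have hXχ : (X + χ)ᵀ * (X + χ) = S * S := by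
    rw [hSS, Matrix.transpose_add, Matrix.add_mul, Matrix.mul_add, Matrix.mul_add, hX]
    have ht : χᵀ * X + Xᵀ * χ = 0 := hχ
    have : Xᵀ * χ + χᵀ * X = 0 := by rw [add_comm]; exact ht
    calc 1 + Xᵀ * χ + (χᵀ * X + χᵀ * χ) = 1 + χᵀ * χ + (Xᵀ * χ + χᵀ * X) := by abel
      _ = 1 + χᵀ * χ := by rw [this, add_zero]
  show (polarRetr X χ)ᵀ * polarRetr X χ = 1
  rw [polarRetr, Matrix.transpose_mul, Matrix.transpose_nonsing_inv, hSt]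
  calc S⁻¹ * (X + χ)ᵀ * ((X + χ) * S⁻¹) = S⁻¹ * ((X + χ)ᵀ * (X + χ)) * S⁻¹ := by
        rw [Matrix.mul_assoc, Matrix.mul_assoc, Matrix.mul_assoc]
    _ = S⁻¹ * (S * S) * S⁻¹ := by rw [hXχ]
    _ = (S⁻¹ * S) * (S * S⁻¹) := by noncomm_ring
    _ = 1 := by rw [hinv, hinv', one_mul]
lemma tangent_zero {d r : ℕ} (X : Mat d r) : (0 : Mat d r) ∈ TangentAt X := by
  simp [TangentAt]
lemma tangent_smul {d r : ℕ} {X ζ : Mat d r} (c : ℝ) (hζ : ζ ∈ TangentAt X) :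
    c • ζ ∈ TangentAt X := by
  have h : ζᵀ * X + Xᵀ * ζ = 0 := hζ
  show (c • ζ)ᵀ * X + Xᵀ * (c • ζ) = 0
  rw [Matrix.transpose_smul, Matrix.smul_mul, Matrix.mul_smul, ← smul_add, h, smul_zero]
lemma tangent_add {d r : ℕ} {X ζ ζ' : Mat d r} (hζ : ζ ∈ TangentAt X) (hζ' : ζ' ∈ TangentAt X) :
    ζ + ζ' ∈ TangentAt X := by
  have h : ζᵀ * X + Xᵀ * ζ = 0 := hζ
  have h' : ζ'ᵀ * X + Xᵀ * ζ' = 0 := hζ'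
  show (ζ + ζ')ᵀ * X + Xᵀ * (ζ + ζ') = 0
  rw [Matrix.transpose_add, Matrix.add_mul, Matrix.mul_add]
  calc ζᵀ * X + ζ'ᵀ * X + (Xᵀ * ζ + Xᵀ * ζ') = (ζᵀ * X + Xᵀ * ζ) + (ζ'ᵀ * X + Xᵀ * ζ') := by abel
    _ = 0 := by rw [h, h', add_zero]

lemma norm_sub_sq_finner {d r : ℕ} (A B : Mat d r) :
    ‖A - B‖ ^ 2 = ‖A‖ ^ 2 - 2 * finner A B + ‖B‖ ^ 2 := by
  rw [norm_sq_eq_finner, norm_sq_eq_finner, norm_sq_eq_finner, finner_sub_left,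
    finner_sub_right, finner_sub_right, finner_comm B A]; ring

lemma midpoint_norm_sq {d r : ℕ} (A B : Mat d r) :
    ‖(1/2 : ℝ) • (A + B)‖ ^ 2 = (1/2) * ‖A‖ ^ 2 + (1/2) * ‖B‖ ^ 2 - (1/4) * ‖A - B‖ ^ 2 := by
  rw [norm_sub_sq_finner, norm_sq_eq_finner, norm_sq_eq_finner, norm_sq_eq_finner,
    finner_smul_left, finner_smul_right, finner_add_left, finner_add_right, finner_add_right,
    finner_comm B A]; ring

/-- strong-convexity-at-minimizer (midpoint version, modulus 1/(4γ) = 5/8 for γ = 2/5) -/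
lemma submin_strong {d r : ℕ} (h : Mat d r → ℝ) (hconv : ConvexOn ℝ Set.univ h)
    {X v ζ : Mat d r} (hmin : IsSubMin (2/5) h X v ζ) {ζ' : Mat d r} (hζ' : ζ' ∈ TangentAt X) :
    phi (2/5) h X v ζ + (5/8) * ‖ζ - ζ'‖ ^ 2 ≤ phi (2/5) h X v ζ' := by
  obtain ⟨hζT, hopt⟩ := hmin
  have hmT : (1/2 : ℝ) • (ζ + ζ') ∈ TangentAt X := tangent_smul _ (tangent_add hζT hζ')
  have h1 : phi (2/5) h X v ζ ≤ phi (2/5) h X v ((1/2 : ℝ) • (ζ + ζ')) := hopt _ hmT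
  have hnorm := midpoint_norm_sq ζ ζ'
  have hXm : X + (1/2 : ℝ) • (ζ + ζ') = (1/2 : ℝ) • (X + ζ) + (1/2 : ℝ) • (X + ζ') := by
    module
  have hh : h (X + (1/2 : ℝ) • (ζ + ζ')) ≤ (1/2) * h (X + ζ) + (1/2) * h (X + ζ') := by
    rw [hXm]
    have := hconv.2 (Set.mem_univ (X + ζ)) (Set.mem_univ (X + ζ'))
      (by norm_num : (0:ℝ) ≤ 1/2) (by norm_num : (0:ℝ) ≤ 1/2) (by norm_num)
    simpa [smul_eq_mul] using this
  simp only [phi] at h1 ⊢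
  rw [hnorm, finner_smul_right, finner_add_right] at h1
  have c1 : (1:ℝ) / (2 * (2/5)) = 5/4 := by norm_num
  rw [c1] at h1 ⊢
  linarith

lemma submin_zero {d r : ℕ} (h : Mat d r → ℝ) (hconv : ConvexOn ℝ Set.univ h)
    {X v ζ : Mat d r} (hmin : IsSubMin (2/5) h X v ζ) :
    finner v ζ + h (X + ζ) - h X ≤ -(15/8) * ‖ζ‖ ^ 2 := by
  have := submin_strong h hconv hmin (tangent_zero X)
  rw [phi, phi] at this
  simp only [sub_zero, add_zero, finner_zero_right, norm_zero] at this
  norm_num at this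
  linarith

/-- distance between the two subproblem minimizers -/
lemma submin_dist {d r : ℕ} (h : Mat d r → ℝ) (hconv : ConvexOn ℝ Set.univ h)
    {X v g ζ ξ : Mat d r} (hminv : IsSubMin (2/5) h X v ζ) (hming : IsSubMin (2/5) h X g ξ) :
    ‖ξ - ζ‖ ^ 2 ≤ (16/25) * ‖v - g‖ ^ 2 := by
  have h1 := submin_strong h hconv hminv hming.1
  have h2 := submin_strong h hconv hming hminv.1
  rw [phi, phi] at h1 h2
  have hy : (0:ℝ) ≤ ‖(v - g) - (5/4 : ℝ) • (ξ - ζ)‖ ^ 2 := sq_nonneg _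
  rw [norm_sq_eq_finner] at hy
  simp only [finner_sub_left, finner_sub_right, finner_smul_left, finner_smul_right] at hy
  have hnn : ‖v - g‖^2 = finner v v - 2 * finner v g + finner g g := by
    rw [norm_sq_eq_finner]
    simp only [finner_sub_left, finner_sub_right]
    rw [finner_comm g v]; ring
  have hnn2 : ‖ξ - ζ‖^2 = finner ξ ξ - 2 * finner ξ ζ + finner ζ ζ := by
    rw [norm_sq_eq_finner]
    simp only [finner_sub_left, finner_sub_right]
    rw [finner_comm ζ ξ]; ring
  have hrev : ‖ζ - ξ‖ = ‖ξ - ζ‖ := norm_sub_rev _ _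
  rw [hrev] at h1
  rw [hnn2] at h1 h2
  rw [hnn, hnn2]
  linarith [h1, h2, hy, finner_comm v g, finner_comm v ξ, finner_comm v ζ, finner_comm g ξ,
    finner_comm g ζ, finner_comm ξ ζ]

lemma stepA {d r : ℕ} (η L_R L_h M₂ : ℝ) (hη0 : 0 < η) (hη1 : η ≤ 1) (hLh : 0 ≤ L_h)
    (f h : Mat d r → ℝ) (hconv : ConvexOn ℝ Set.univ h)
    (hlip : ∀ A B : Mat d r, |h A - h B| ≤ L_h * ‖A - B‖)
    (g Xc Xn vv ζc : Mat d r)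
    (hmin : IsSubMin (2/5) h Xc vv ζc)
    (hdec : f Xn ≤ f Xc + η * finner g ζc + (L_R * η^2/2) * ‖ζc‖^2)
    (hM2 : ‖Xn - (Xc + η • ζc)‖ ≤ M₂ * η^2 * ‖ζc‖^2) :
    f Xn + h Xn ≤ f Xc + h Xc + ((L_R/2 + L_h*M₂)*η^2 - (11/8)*η) * ‖ζc‖^2
      + (η/2) * ‖vv - g‖^2 := by
  have hsc := submin_zero h hconv hmin
  have hyoung : finner (g - vv) ζc ≤ (1/2)*‖vv - g‖^2 + (1/2)*‖ζc‖^2 := by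
    have h0 : (0:ℝ) ≤ ‖(g - vv) - ζc‖^2 := sq_nonneg _
    rw [norm_sub_sq_finner] at h0
    have hEq : ‖g - vv‖ = ‖vv - g‖ := norm_sub_rev _ _
    rw [hEq] at h0
    linarith
  have m3 : η * finner g ζc = η * finner vv ζc + η * finner (g - vv) ζc := by
    rw [finner_sub_left]; ring
  have hconvseg : h (Xc + η • ζc) ≤ (1-η) * h Xc + η * h (Xc + ζc) := by
    have hXm : Xc + η • ζc = (1-η) • Xc + η • (Xc + ζc) := by module
    rw [hXm]
    have := hconv.2 (Set.mem_univ Xc) (Set.mem_univ (Xc + ζc))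
      (by linarith : (0:ℝ) ≤ 1-η) hη0.le (by ring)
    simpa [smul_eq_mul] using this
  have hlipstep : h Xn ≤ h (Xc + η • ζc) + L_h * (M₂ * η^2 * ‖ζc‖^2) := by
    have h1 := hlip Xn (Xc + η • ζc)
    have h3 : L_h * ‖Xn - (Xc + η•ζc)‖ ≤ L_h * (M₂*η^2*‖ζc‖^2) :=
      mul_le_mul_of_nonneg_left hM2 hLh
    have h4 := le_abs_self (h Xn - h (Xc + η•ζc))
    linarith
  have m1 : η * (finner vv ζc + h (Xc + ζc) - h Xc) ≤ η * (-(15/8) * ‖ζc‖^2) :=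
    mul_le_mul_of_nonneg_left hsc hη0.le
  have m2 : η * finner (g - vv) ζc ≤ η * ((1/2)*‖vv-g‖^2 + (1/2)*‖ζc‖^2) :=
    mul_le_mul_of_nonneg_left hyoung hη0.le
  nlinarith [hdec, hconvseg, hlipstep, m1, m2, m3]

lemma stepB {d r : ℕ} (M₁ : ℝ) (hM₁ : 0 ≤ M₁) (h : Mat d r → ℝ)
    (hconv : ConvexOn ℝ Set.univ h)
    (Xc vv g ζc ξc Gt : Mat d r)
    (hminv : IsSubMin (2/5) h Xc vv ζc) (hming : IsSubMin (2/5) h Xc g ξc)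
    (hret : ∀ χ ∈ TangentAt Xc, ‖polarRetr Xc χ - Xc‖ ≤ M₁ * ‖χ‖)
    (hGt : Gt = (1/(2/5) : ℝ) • (Xc - polarRetr Xc ((2/5 : ℝ) • ξc))) :
    ‖Gt‖^2 ≤ 2*M₁^2*‖ζc‖^2 + (32/25)*M₁^2*‖vv - g‖^2 := by
  have hξT : (2/5 : ℝ) • ξc ∈ TangentAt Xc := tangent_smul _ hming.1
  have h1 : ‖polarRetr Xc ((2/5:ℝ)•ξc) - Xc‖ ≤ M₁ * ‖(2/5:ℝ)•ξc‖ := hret _ hξT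
  have h2 : ‖(2/5:ℝ)•ξc‖ = (2/5)*‖ξc‖ := by
    rw [norm_smul]; norm_num
  have hGn : ‖Gt‖ = (5/2)*‖Xc - polarRetr Xc ((2/5:ℝ)•ξc)‖ := by
    rw [hGt, norm_smul]; norm_num
  have hrev : ‖Xc - polarRetr Xc ((2/5:ℝ)•ξc)‖ = ‖polarRetr Xc ((2/5:ℝ)•ξc) - Xc‖ :=
    norm_sub_rev _ _
  have hG1 : ‖Gt‖ ≤ M₁ * ‖ξc‖ := by
    rw [hGn, hrev]
    rw [h2] at h1
    linarith
  have hdist : ‖ξc - ζc‖^2 ≤ (16/25) * ‖vv - g‖^2 := submin_dist h hconv hminv hming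
  have htri : ‖ξc‖ ≤ ‖ζc‖ + ‖ξc - ζc‖ := by
    calc ‖ξc‖ = ‖ζc + (ξc - ζc)‖ := by rw [add_sub_cancel]
      _ ≤ ‖ζc‖ + ‖ξc - ζc‖ := norm_add_le _ _
  have hG2 : ‖Gt‖^2 ≤ M₁^2 * ‖ξc‖^2 := by
    have := mul_self_le_mul_self (norm_nonneg Gt) hG1
    calc ‖Gt‖^2 = ‖Gt‖ * ‖Gt‖ := sq _
      _ ≤ (M₁ * ‖ξc‖) * (M₁ * ‖ξc‖) := this
      _ = M₁^2 * ‖ξc‖^2 := by ring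
  have hξ2 : ‖ξc‖^2 ≤ 2*‖ζc‖^2 + 2*‖ξc - ζc‖^2 := by
    nlinarith [htri, norm_nonneg ξc, norm_nonneg ζc, norm_nonneg (ξc - ζc),
      sq_nonneg (‖ζc‖ - ‖ξc - ζc‖)]
  nlinarith [hG2, hξ2, hdist, sq_nonneg M₁]

lemma epoch_sum_le (q T : ℕ) (hq : 1 ≤ q) (a : ℕ → ℝ) (ha : ∀ i, 0 ≤ a i) :
    ∑ t ∈ Finset.range T, ∑ i ∈ Finset.Ico (q * (t / q)) t, a i
      ≤ q * ∑ i ∈ Finset.range T, a i := by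
  have step1 : ∀ t ∈ Finset.range T, ∑ i ∈ Finset.Ico (q*(t/q)) t, a i
      = ∑ i ∈ Finset.range T, if i ∈ Finset.Ico (q*(t/q)) t then a i else 0 := by
    intro t ht
    rw [Finset.sum_ite_mem]
    congr 1
    refine ((Finset.inter_eq_right).2 ?_).symm
    intro i hi
    rw [Finset.mem_Ico] at hi
    rw [Finset.mem_range] at ht ⊢
    omega
  rw [Finset.sum_congr rfl step1, Finset.sum_comm]
  have step2 : ∀ i ∈ Finset.range T,
      (∑ t ∈ Finset.range T, if i ∈ Finset.Ico (q*(t/q)) t then a i else 0) ≤ q * a i := by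
    intro i _
    rw [← Finset.sum_filter, Finset.sum_const]
    have hsub : (Finset.range T).filter (fun t => i ∈ Finset.Ico (q*(t/q)) t)
        ⊆ Finset.Ico (i+1) (i+q) := by
      intro t ht
      simp only [Finset.mem_filter, Finset.mem_Ico, Finset.mem_range] at ht ⊢
      obtain ⟨-, h1, h2⟩ := ht
      have hq0 : 0 < q := hq
      refine ⟨by omega, ?_⟩
      calc t = q*(t/q) + t % q := (Nat.div_add_mod t q).symm
        _ ≤ i + t % q := Nat.add_le_add_right h1 _
        _ < i + q := Nat.add_lt_add_left (Nat.mod_lt t hq0) i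
    have hcard := Finset.card_le_card hsub
    rw [Nat.card_Ico] at hcard
    have hle : ((Finset.range T).filter (fun t => i ∈ Finset.Ico (q*(t/q)) t)).card ≤ q := by
      omega
    rw [nsmul_eq_mul]
    exact mul_le_mul_of_nonneg_right (by exact_mod_cast hle) (ha i)
  calc ∑ i ∈ Finset.range T, (∑ t ∈ Finset.range T, if i ∈ Finset.Ico (q*(t/q)) t then a i else 0)
      ≤ ∑ i ∈ Finset.range T, q * a i := Finset.sum_le_sum step2
    _ = q * ∑ i ∈ Finset.range T, a i := by rw [Finset.mul_sum]

set_option maxHeartbeats 1000000 in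
/-- Theorem 2(ii), online R-ProxSPB: with `γ = 2/5` and the epoch-wise R-SARAH
variance bound with batch-size term `σ²/s`,
`(1/T)∑_{t<T} E[‖G_t‖²] ≤ (14M₁² + (16/5)M₁²Λη²)·Δ₀/(ηT) + 59M₁²σ²/(5s)`. -/
theorem RProxSPB_online_convergence {d r : ℕ}
    {Ω : Type*} [MeasurableSpace Ω] (P : Measure Ω) [IsProbabilityMeasure P]
    (T q : ℕ) (hT : 1 ≤ T) (hq : 1 ≤ q)
    (γ η L_R L_h M₁ M₂ Λ Fstar Δ₀ : ℝ)
    (hγ : γ = 2 / 5)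
    (hη0 : 0 < η) (hη1 : η ≤ 1)
    (hLR : 0 < L_R) (hLh : 0 < L_h) (hM₁ : 0 < M₁) (hM₂ : 0 < M₂) (hΛ : 0 ≤ Λ)
    (hηc : Λ * η ^ 2 / 2 + (L_R / 2 + L_h * M₂) * η - 2 ≤ -1)
    (f h : Mat d r → ℝ)
    (hconv : ConvexOn ℝ Set.univ h)
    (hlip : ∀ A B : Mat d r, |h A - h B| ≤ L_h * ‖A - B‖)
    (hdiff : Differentiable ℝ f)
    (Gf : Mat d r → Mat d r)
    (hgrad : ∀ Y u : Mat d r, (fderiv ℝ f Y) u = finner (Gf Y) u)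
    (hFlb : ∀ Y : Mat d r, Stiefel Y → Fstar ≤ f Y + h Y)
    (X0 : Mat d r) (hX0S : Stiefel X0)
    (hΔ₀ : Δ₀ = (f X0 + h X0) - Fstar)
    (X v ζ ξ : ℕ → Ω → Mat d r)
    (hX0 : ∀ ω, X 0 ω = X0)
    (has : ∀ᵐ ω ∂P, ∀ t < T,
      Stiefel (X t ω) ∧
      IsSubMin γ h (X t ω) (v t ω) (ζ t ω) ∧
      X (t + 1) ω = polarRetr (X t ω) (η • ζ t ω) ∧
      f (X (t + 1) ω) ≤
        f (X t ω) + η * finner (Gf (X t ω)) (ζ t ω) + (L_R * η ^ 2 / 2) * ‖ζ t ω‖ ^ 2 ∧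
      ‖X (t + 1) ω - (X t ω + η • ζ t ω)‖ ≤ M₂ * η ^ 2 * ‖ζ t ω‖ ^ 2 ∧
      (∀ χ ∈ TangentAt (X t ω), ‖polarRetr (X t ω) χ - X t ω‖ ≤ M₁ * ‖χ‖) ∧
      IsSubMin γ h (X t ω) (Gf (X t ω)) (ξ t ω))
    (G : ℕ → Ω → Mat d r)
    (hG : ∀ t ω, G t ω = (1 / γ) • (X t ω - polarRetr (X t ω) (γ • ξ t ω)))
    (hintF : ∀ t ≤ T, Integrable (fun ω => f (X t ω) + h (X t ω)) P)
    (hintζ : ∀ t < T, Integrable (fun ω => ‖ζ t ω‖ ^ 2) P)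
    (hintv : ∀ t < T, Integrable (fun ω => ‖v t ω - Gf (X t ω)‖ ^ 2) P)
    (hintG : ∀ t < T, Integrable (fun ω => ‖G t ω‖ ^ 2) P)
    (σ s : ℝ) (hσ : 0 ≤ σ) (hs : 0 < s)
    (hηc2 : Λ * η ^ 2 ≤ 1 / 2)
    (hvar : ∀ t < T, ∫ ω, ‖v t ω - Gf (X t ω)‖ ^ 2 ∂P ≤
      σ ^ 2 / s + (Λ * η ^ 2 / q) * ∑ i ∈ Finset.Ico (q * (t / q)) t, ∫ ω, ‖ζ i ω‖ ^ 2 ∂P) :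
    (1 / (T : ℝ)) * ∑ t ∈ Finset.range T, ∫ ω, ‖G t ω‖ ^ 2 ∂P ≤
      (14 * M₁ ^ 2 + (16 / 5) * M₁ ^ 2 * Λ * η ^ 2) * Δ₀ / (η * T)
        + 59 * M₁ ^ 2 * σ ^ 2 / (5 * s) := by

  subst hγ
  subst hΔ₀
  have hT0 : (0:ℝ) < T := by exact_mod_cast hT
  have hΔ0 : 0 ≤ (f X0 + h X0) - Fstar := by linarith [hFlb X0 hX0S]
  have ha0 : ∀ t : ℕ, 0 ≤ ∫ ω, ‖ζ t ω‖^2 ∂P := fun t => integral_nonneg fun ω => sq_nonneg _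
  have hb0 : ∀ t : ℕ, 0 ≤ ∫ ω, ‖v t ω - Gf (X t ω)‖^2 ∂P :=
    fun t => integral_nonneg fun ω => sq_nonneg _
  set c₁ : ℝ := (L_R/2 + L_h*M₂)*η^2 - (11/8)*η with hc₁def
  -- Step A integrated
  have key1 : ∀ t, t < T → (∫ ω, (f (X (t+1) ω) + h (X (t+1) ω)) ∂P)
      ≤ (∫ ω, (f (X t ω) + h (X t ω)) ∂P) + (c₁ * ∫ ω, ‖ζ t ω‖^2 ∂P
        + (η/2) * ∫ ω, ‖v t ω - Gf (X t ω)‖^2 ∂P) := by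
    intro t ht
    have hi1 : Integrable (fun ω => c₁ * ‖ζ t ω‖^2) P := (hintζ t ht).const_mul c₁
    have hi2 : Integrable (fun ω => (η/2) * ‖v t ω - Gf (X t ω)‖^2) P :=
      (hintv t ht).const_mul (η/2)
    have hi3 : Integrable (fun ω => c₁ * ‖ζ t ω‖^2 + (η/2) * ‖v t ω - Gf (X t ω)‖^2) P :=
      hi1.add hi2
    have hi0 : Integrable (fun ω => f (X t ω) + h (X t ω)) P := hintF t (by omega)
    have hae : ∀ᵐ ω ∂P, f (X (t+1) ω) + h (X (t+1) ω)
        ≤ (f (X t ω) + h (X t ω)) + (c₁ * ‖ζ t ω‖^2 + (η/2) * ‖v t ω - Gf (X t ω)‖^2) := by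
      filter_upwards [has] with ω hω
      obtain ⟨hSt, hmin, hXn, hdec, hM2b, hret, hming⟩ := hω t ht
      have := stepA η L_R L_h M₂ hη0 hη1 hLh.le f h hconv hlip (Gf (X t ω)) (X t ω)
        (X (t+1) ω) (v t ω) (ζ t ω) hmin hdec hM2b
      rw [hc₁def]; linarith
    have hmono := integral_mono_ae (hintF (t+1) (by omega)) (hi0.add hi3) hae
    calc (∫ ω, (f (X (t+1) ω) + h (X (t+1) ω)) ∂P)
        ≤ ∫ ω, ((f (X t ω) + h (X t ω))
            + (c₁ * ‖ζ t ω‖^2 + (η/2) * ‖v t ω - Gf (X t ω)‖^2)) ∂P := hmono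
      _ = (∫ ω, (f (X t ω) + h (X t ω)) ∂P) + (c₁ * ∫ ω, ‖ζ t ω‖^2 ∂P
            + (η/2) * ∫ ω, ‖v t ω - Gf (X t ω)‖^2 ∂P) := by
          rw [integral_add hi0 hi3, integral_add hi1 hi2, integral_const_mul, integral_const_mul]
  -- lower bound on final value
  have key3 : Fstar ≤ ∫ ω, (f (X T ω) + h (X T ω)) ∂P := by
    have hae : ∀ᵐ ω ∂P, Fstar ≤ f (X T ω) + h (X T ω) := by
      filter_upwards [has] with ω hω
      obtain ⟨hSt, hmin, hXn, -, -, -, -⟩ := hω (T-1) (by omega)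
      have hTT : T - 1 + 1 = T := by omega
      have hstiefel : Stiefel (X T ω) := by
        rw [← hTT, hXn]
        exact stiefel_polarRetr hSt (tangent_smul η hmin.1)
      exact hFlb _ hstiefel
    have := integral_mono_ae (integrable_const Fstar) (hintF T le_rfl) hae
    simpa using this
  have key0 : (∫ ω, (f (X 0 ω) + h (X 0 ω)) ∂P) = f X0 + h X0 := by
    simp only [hX0]
    simp
  -- telescope
  set A := ∑ t ∈ Finset.range T, ∫ ω, ‖ζ t ω‖^2 ∂P with hAdef
  set B := ∑ t ∈ Finset.range T, ∫ ω, ‖v t ω - Gf (X t ω)‖^2 ∂P with hBdef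
  have hA0 : 0 ≤ A := Finset.sum_nonneg fun t _ => ha0 t
  have hB0 : 0 ≤ B := Finset.sum_nonneg fun t _ => hb0 t
  have tel : (∫ ω, (f (X T ω) + h (X T ω)) ∂P) - (f X0 + h X0) ≤ c₁ * A + (η/2) * B := by
    have h1 : (∫ ω, (f (X T ω) + h (X T ω)) ∂P) - (f X0 + h X0)
        = ∑ t ∈ Finset.range T,
          ((∫ ω, (f (X (t+1) ω) + h (X (t+1) ω)) ∂P) - ∫ ω, (f (X t ω) + h (X t ω)) ∂P) := by
      rw [Finset.sum_range_sub (fun t => ∫ ω, (f (X t ω) + h (X t ω)) ∂P) T, key0]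
    rw [h1, hAdef, hBdef, Finset.mul_sum, Finset.mul_sum, ← Finset.sum_add_distrib]
    exact Finset.sum_le_sum fun t ht => by
      have := key1 t (Finset.mem_range.1 ht); linarith
  -- variance bound summed
  have hBb : B ≤ T * (σ^2/s) + Λ*η^2 * A := by
    have h1 : B ≤ ∑ t ∈ Finset.range T, (σ^2/s
        + (Λ*η^2/q) * ∑ i ∈ Finset.Ico (q*(t/q)) t, ∫ ω, ‖ζ i ω‖^2 ∂P) := by
      rw [hBdef]
      exact Finset.sum_le_sum fun t ht => hvar t (Finset.mem_range.1 ht)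
    have h2 : ∑ t ∈ Finset.range T, (σ^2/s
        + (Λ*η^2/q) * ∑ i ∈ Finset.Ico (q*(t/q)) t, ∫ ω, ‖ζ i ω‖^2 ∂P)
        = T * (σ^2/s) + (Λ*η^2/q) * ∑ t ∈ Finset.range T,
            ∑ i ∈ Finset.Ico (q*(t/q)) t, ∫ ω, ‖ζ i ω‖^2 ∂P := by
      rw [Finset.sum_add_distrib, Finset.sum_const, Finset.card_range, nsmul_eq_mul,
        ← Finset.mul_sum]
    have h3 : ∑ t ∈ Finset.range T, ∑ i ∈ Finset.Ico (q*(t/q)) t, ∫ ω, ‖ζ i ω‖^2 ∂P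
        ≤ q * A := by
      rw [hAdef]
      exact epoch_sum_le q T hq _ fun i => ha0 i
    have hq0 : (0:ℝ) < q := by exact_mod_cast hq
    have h4 : (Λ*η^2/q) * (∑ t ∈ Finset.range T,
        ∑ i ∈ Finset.Ico (q*(t/q)) t, ∫ ω, ‖ζ i ω‖^2 ∂P) ≤ (Λ*η^2/q) * (q * A) :=
      mul_le_mul_of_nonneg_left h3 (by positivity)
    have h5 : (Λ*η^2/q) * ((q:ℝ) * A) = Λ*η^2*A := by field_simp
    linarith
  -- bound on A
  have hc₁b : c₁ ≤ -(3/8)*η - Λ*η^3/2 := by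
    rw [hc₁def]
    have hm := mul_le_mul_of_nonneg_left hηc hη0.le
    nlinarith [hm]
  have hAb : (3/8) * A ≤ ((f X0 + h X0) - Fstar)/η + (1/2) * ((T:ℝ) * (σ^2/s)) := by
    have e3 : c₁ * A ≤ (-(3/8)*η - Λ*η^3/2) * A := mul_le_mul_of_nonneg_right hc₁b hA0
    have e4 : (η/2) * B ≤ (η/2) * ((T:ℝ) * (σ^2/s) + Λ*η^2 * A) :=
      mul_le_mul_of_nonneg_left hBb (by positivity)
    have e5 : η * ((3/8) * A) ≤ η * (((f X0 + h X0) - Fstar)/η + (1/2) * ((T:ℝ) * (σ^2/s))) := by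
      have hηΔ : η * (((f X0 + h X0) - Fstar)/η) = (f X0 + h X0) - Fstar := by field_simp
      nlinarith [key3, tel, e3, e4]
    exact le_of_mul_le_mul_left e5 hη0
  -- Step B integrated
  have key2 : ∀ t, t < T → (∫ ω, ‖G t ω‖^2 ∂P)
      ≤ 2*M₁^2 * (∫ ω, ‖ζ t ω‖^2 ∂P) + (32/25)*M₁^2 * ∫ ω, ‖v t ω - Gf (X t ω)‖^2 ∂P := by
    intro t ht
    have hi1 : Integrable (fun ω => 2*M₁^2 * ‖ζ t ω‖^2) P := (hintζ t ht).const_mul _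
    have hi2 : Integrable (fun ω => (32/25)*M₁^2 * ‖v t ω - Gf (X t ω)‖^2) P :=
      (hintv t ht).const_mul _
    have hae : ∀ᵐ ω ∂P, ‖G t ω‖^2
        ≤ 2*M₁^2 * ‖ζ t ω‖^2 + (32/25)*M₁^2 * ‖v t ω - Gf (X t ω)‖^2 := by
      filter_upwards [has] with ω hω
      obtain ⟨hSt, hmin, hXn, hdec, hM2b, hret, hming⟩ := hω t ht
      exact stepB M₁ hM₁.le h hconv (X t ω) (v t ω) (Gf (X t ω)) (ζ t ω) (ξ t ω) (G t ω)
        hmin hming hret (hG t ω)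
    have hmono := integral_mono_ae (hintG t ht) (hi1.add hi2) hae
    calc (∫ ω, ‖G t ω‖^2 ∂P)
        ≤ ∫ ω, (2*M₁^2 * ‖ζ t ω‖^2 + (32/25)*M₁^2 * ‖v t ω - Gf (X t ω)‖^2) ∂P := hmono
      _ = 2*M₁^2 * (∫ ω, ‖ζ t ω‖^2 ∂P)
            + (32/25)*M₁^2 * ∫ ω, ‖v t ω - Gf (X t ω)‖^2 ∂P := by
          rw [integral_add hi1 hi2, integral_const_mul, integral_const_mul]
  have hC : (∑ t ∈ Finset.range T, ∫ ω, ‖G t ω‖^2 ∂P) ≤ 2*M₁^2*A + (32/25)*M₁^2*B := by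
    rw [hAdef, hBdef, Finset.mul_sum, Finset.mul_sum, ← Finset.sum_add_distrib]
    exact Finset.sum_le_sum fun t ht => key2 t (Finset.mem_range.1 ht)
  -- final arithmetic
  set C := ∑ t ∈ Finset.range T, ∫ ω, ‖G t ω‖^2 ∂P with hCdef
  set D := ((f X0 + h X0) - Fstar)/η with hDdef
  set W := (T:ℝ) * (σ^2/s) with hWdef
  have hM1sq : (0:ℝ) ≤ M₁^2 := sq_nonneg M₁
  have hW0 : 0 ≤ W := by rw [hWdef]; positivity
  have hD0 : 0 ≤ D := by rw [hDdef]; exact div_nonneg hΔ0 hη0.le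
  have s1 : Λ*η^2*A ≤ (1/2)*A := by nlinarith [mul_le_mul_of_nonneg_right hηc2 hA0]
  have s2 : B ≤ W + (1/2)*A := by linarith
  have s3 : C ≤ (66/25)*M₁^2*A + (32/25)*M₁^2*W := by
    nlinarith [mul_le_mul_of_nonneg_left s2
      (mul_nonneg (by norm_num : (0:ℝ) ≤ 32/25) hM1sq), hC]
  have s4 : A ≤ (8/3)*D + (4/3)*W := by linarith
  have s5 : C ≤ 14*M₁^2*D + (59/5)*M₁^2*W := by
    nlinarith [mul_le_mul_of_nonneg_left s4
      (mul_nonneg (by norm_num : (0:ℝ) ≤ 66/25) hM1sq), s3, mul_nonneg hM1sq hD0,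
      mul_nonneg hM1sq hW0]
  have g1 : (1/(T:ℝ))*C ≤ (1/(T:ℝ))*(14*M₁^2*D + (59/5)*M₁^2*W) :=
    mul_le_mul_of_nonneg_left s5 (by positivity)
  have g2 : (1/(T:ℝ))*(14*M₁^2*D + (59/5)*M₁^2*W)
      = 14*M₁^2*((f X0 + h X0) - Fstar)/(η*T) + 59*M₁^2*σ^2/(5*s) := by
    rw [hDdef, hWdef]
    field_simp
  have g3 : 14*M₁^2*((f X0 + h X0) - Fstar)/(η*T)
      ≤ (14*M₁^2 + (16/5)*M₁^2*Λ*η^2) * ((f X0 + h X0) - Fstar)/(η*T) := by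
    have hpos : (0:ℝ) < η*T := by positivity
    have hnum : 14*M₁^2*((f X0 + h X0) - Fstar)
        ≤ (14*M₁^2 + (16/5)*M₁^2*Λ*η^2) * ((f X0 + h X0) - Fstar) := by
      have h0 : 0 ≤ (16/5)*M₁^2*Λ*η^2 := by positivity
      nlinarith [h0, hΔ0]
    exact div_le_div_of_nonneg_right hnum hpos.le
  linarith [g1, g2 ▸ g1, g3]
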